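/- For the Bregman iteration p^{k+1} ∈ argmin_p { (1/2)‖K p − (f + b^k)‖² + λ J(p) }, b^{k+1} = b^k + (f − K p^{k+1}), with b⁰ = 0, the residual norms ‖K p^{k+1} − f‖ are monotonically non-increasing in k, provided J is convex. -/
import Mathlib

open RealInnerProductSpace

/-- If `0 ≤ t*A + t^2*B` for all small positive `t`, then `0 ≤ A`. -/
lemma bregman_aux_small (A B : ℝ) (h : ∀ t : ℝ, 0 < t → t ≤ 1 → 0 ≤ t * A + t ^ 2 * B) :
    0 ≤ A := by
  by_contra hA
  push_neg at hA
  have hB : 0 < B := by have h1 := h 1 one_pos le_rfl; nlinarith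
  set t := min 1 (-A / (2 * B)) with ht
  have htpos : 0 < t := lt_min one_pos (div_pos (by linarith) (by positivity))
  have ht1 : t ≤ 1 := min_le_left _ _
  have h2 : t ≤ -A / (2 * B) := min_le_right _ _
  have h3 : t * (2 * B) ≤ -A := by
    rw [le_div_iff₀ (by positivity)] at h2
    linarith
  have h4 := h t htpos ht1
  nlinarith [sq_nonneg t, mul_pos htpos htpos]

lemma bregman_norm_expand {H' : Type*} [NormedAddCommGroup H'] [InnerProductSpace ℝ H']
    (a c : H') (t : ℝ) :
    ‖a + t • c‖ ^ 2 = ‖a‖ ^ 2 + 2 * t * ⟪a, c⟫ + t ^ 2 * ‖c‖ ^ 2 := by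
  rw [norm_add_sq_real, real_inner_smul_right, norm_smul, mul_pow, Real.norm_eq_abs, sq_abs]
  ring

/-- For the Bregman iteration, the residual norms `‖K p^{k+1} − f‖` are
monotonically non-increasing, provided `J` is convex. -/
theorem bregman_residual_monotone
    {H H' : Type*} [NormedAddCommGroup H] [InnerProductSpace ℝ H]
    [NormedAddCommGroup H'] [InnerProductSpace ℝ H']
    (K : H →ₗ[ℝ] H') (J : H → ℝ) (hJ : ConvexOn ℝ Set.univ J)
    (lam : ℝ) (hlam : 0 < lam) (f : H')
    (p : ℕ → H) (b : ℕ → H')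
    (hb0 : b 0 = 0)
    (hbrec : ∀ k : ℕ, b (k+1) = b k + (f - K (p (k+1))))
    (hmin : ∀ k : ℕ, ∀ q : H,
      (1/2) * ‖K (p (k+1)) - (f + b k)‖^2 + lam * J (p (k+1)) ≤
      (1/2) * ‖K q - (f + b k)‖^2 + lam * J q) :
    ∀ k : ℕ, ‖K (p (k+2)) - f‖ ≤ ‖K (p (k+1)) - f‖ := by
  intro k
  -- notation
  set w : H' := K (p (k+1)) with hw
  set g : H' := f + b k with hg
  -- Step 1: subgradient inequality from step-k minimality + convexity
  have hsub : ∀ q : H,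
      lam * J (p (k+1)) + ⟪g - w, K q - w⟫ ≤ lam * J q := by
    intro q
    have key : 0 ≤ ⟪w - g, K q - w⟫ + lam * (J q - J (p (k+1))) := by
      apply bregman_aux_small _ ((1/2) * ‖K q - w‖ ^ 2)
      intro t ht0 ht1
      have hm := hmin k ((1 - t) • p (k+1) + t • q)
      have harg : K ((1 - t) • p (k+1) + t • q) - (f + b k)
          = (w - g) + t • (K q - w) := by
        simp only [map_add, map_smul, hw, hg]
        module
      rw [harg] at hm
      rw [bregman_norm_expand] at hm
      have hcv : J ((1 - t) • p (k+1) + t • q) ≤ (1 - t) * J (p (k+1)) + t * J q :=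
        hJ.2 (Set.mem_univ _) (Set.mem_univ _) (by linarith) ht0.le (by ring)
      have hm2 : (1/2) * ‖w - g‖^2 + lam * J (p (k+1)) ≤
          (1/2) * (‖w - g‖ ^ 2 + 2 * t * ⟪w - g, K q - w⟫ + t ^ 2 * ‖K q - w‖ ^ 2)
          + lam * ((1 - t) * J (p (k+1)) + t * J q) := by
        refine hm.trans ?_
        have := mul_le_mul_of_nonneg_left hcv hlam.le
        linarith
      nlinarith [hm2]
    have hflip : ⟪g - w, K q - w⟫ = -⟪w - g, K q - w⟫ := by
      rw [← inner_neg_left]; rw [neg_sub]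
    rw [hflip]; nlinarith [key]
  -- Step 2: use step-(k+1) minimality at q = p (k+1)
  have hm1 := hmin (k+1) (p (k+1))
  have hbk : b (k+1) = g - w := by rw [hbrec k, hg, hw]; abel
  -- d = b (k+1), u = w - f, v = K p^{k+2} - f
  set v : H' := K (p (k+2)) with hv
  have harg1 : K (p (k+2)) - (f + b (k+1)) = (v - f) - (g - w) := by
    rw [hbk]; abel
  have harg2 : w - (f + b (k+1)) = (w - f) - (g - w) := by
    rw [hbk]; abel
  rw [harg1, harg2] at hm1
  have hsub2 := hsub (p (k+2))
  -- inner product expansions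
  have e1 : ‖(v - f) - (g - w)‖ ^ 2
      = ‖v - f‖ ^ 2 - 2 * ⟪v - f, g - w⟫ + ‖g - w‖ ^ 2 := norm_sub_sq_real _ _
  have e2 : ‖(w - f) - (g - w)‖ ^ 2
      = ‖w - f‖ ^ 2 - 2 * ⟪w - f, g - w⟫ + ‖g - w‖ ^ 2 := norm_sub_sq_real _ _
  have e3 : ⟪g - w, v - w⟫ = ⟪v - f, g - w⟫ - ⟪w - f, g - w⟫ := by
    simp only [inner_sub_left, inner_sub_right]
    rw [real_inner_comm g v, real_inner_comm g w, real_inner_comm w v]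
    ring
  rw [e1, e2] at hm1
  rw [e3] at hsub2
  have hsq : ‖v - f‖ ^ 2 ≤ ‖w - f‖ ^ 2 := by linarith
  exact (pow_le_pow_iff_left₀ (norm_nonneg _) (norm_nonneg _) two_ne_zero).mp hsq
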